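/- Let σ ∈ S_n, let i_1 < ... < i_L enumerate a set belonging to I_k(σ) (a union of at most k increasing subsequences of σ) of maximal size L = Σ_{j=1}^{k} λ_j(σ). Then for any other permutation σ' ∈ S_n, (Σ_{j=1}^{k} λ_j(σ') − Σ_{j=1}^{k} λ_j(σ))₋ ≤ card{j ≤ L : σ(i_j) ≠ σ'(i_j)}, where x₋ = max(−x, 0). -/
import Mathlib


open Finset
open scoped Classical

/-- `s` is a union of `k` increasing subsequences of `σ` (a member of `I_k(σ)`). -/
def IsUnionIncr {n : ℕ} (σ : Equiv.Perm (Fin n)) (k : ℕ) (s : Finset (Fin n)) : Prop :=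
  ∃ t : Fin k → Finset (Fin n), s = Finset.univ.biUnion t ∧
    ∀ a : Fin k, ∀ i ∈ t a, ∀ j ∈ t a, i < j → σ i < σ j

/-- `greeneSum σ k` is the maximal cardinality of a member of `I_k(σ)`; by Greene's
theorem this equals `λ₁(σ) + ⋯ + λ_k(σ)`. -/
noncomputable def greeneSum {n : ℕ} (σ : Equiv.Perm (Fin n)) (k : ℕ) : ℕ :=
  Finset.sup ((Finset.univ : Finset (Finset (Fin n))).filter (IsUnionIncr σ k))
    Finset.card

/-- If `s ∈ I_k(σ)` has maximal size `Σ_{j≤k} λ_j(σ)`, then for any other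
permutation `σ'`, the negative part of `Σ_{j≤k} λ_j(σ') − Σ_{j≤k} λ_j(σ)` is at
most the number of elements of `s` on which `σ` and `σ'` differ. -/
theorem greeneSum_neg_part_le {n k : ℕ} (σ σ' : Equiv.Perm (Fin n))
    (s : Finset (Fin n)) (hs : IsUnionIncr σ k s) (hcard : s.card = greeneSum σ k) :
    max ((greeneSum σ k : ℤ) - (greeneSum σ' k : ℤ)) 0
      ≤ ((s.filter fun x => σ x ≠ σ' x).card : ℤ) := by
  obtain ⟨t, hst, hinc⟩ := hs
  -- the agreement set
  set s' : Finset (Fin n) := s.filter (fun x => σ x = σ' x) with hs'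
  have hunion : IsUnionIncr σ' k s' := by
    refine ⟨fun a => (t a).filter (fun x => σ x = σ' x), ?_, ?_⟩
    · ext x
      simp only [hs', hst, Finset.mem_filter, Finset.mem_biUnion, Finset.mem_univ,
        true_and]
      tauto
    · intro a i hi j hj hij
      simp only [Finset.mem_filter] at hi hj
      rw [← hi.2, ← hj.2]
      exact hinc a i hi.1 j hj.1 hij
  have hle : s'.card ≤ greeneSum σ' k := by
    apply Finset.le_sup (f := Finset.card)
    simp [hunion]
  have hsplit : s'.card + (s.filter fun x => σ x ≠ σ' x).card = s.card := by
    rw [hs']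
    exact Finset.card_filter_add_card_filter_not (p := fun x => σ x = σ' x)
  have h1 : (greeneSum σ k : ℤ) - (greeneSum σ' k : ℤ)
      ≤ ((s.filter fun x => σ x ≠ σ' x).card : ℤ) := by
    have := hle
    omega
  have h2 : (0 : ℤ) ≤ ((s.filter fun x => σ x ≠ σ' x).card : ℤ) := by positivity
  exact max_le h1 h2
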